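/- arXiv:1901.08573 — 5 statements merged into one kernel-verified Lean document; each statement's English description precedes it below -/
import Mathlib

section
/- The robust classification error decomposes exactly as the sum of the natural classification error and the boundary error: R_rob(f) = R_nat(f) + R_bdy(f). -/
/-! When `f x * y > 0`, a point `x'` satisfies `f x' * y ≤ 0` exactly when `f x * f x' ≤ 0`.
So a sample is robustly misclassified iff it is misclassified, or it is correctly classified and
lies within `ε` of the decision boundary; these two events are disjoint, and the measure splits. -/

open MeasureTheory Set

theorem mul_nonpos_iff_of_mul_pos {α : Type*} [CommRing α] [LinearOrder α] [IsStrictOrderedRing α]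
    {a b c : α} (h : 0 < a * c) : b * c ≤ 0 ↔ a * b ≤ 0 := by
  -- `(a * b) * (a * c) = a ^ 2 * (b * c)` and `(b * c) * (a * c) = c ^ 2 * (a * b)`
  constructor <;> intro hle <;> nlinarith [mul_self_nonneg a, mul_self_nonneg c]

theorem setOf_exists_mul_nonpos_eq_union {X : Type*} [SeminormedAddCommGroup X] (f : X → ℝ)
    {ε : ℝ} (hε : 0 ≤ ε) :
    {p : X × ℝ | ∃ x', ‖x' - p.1‖ ≤ ε ∧ f x' * p.2 ≤ 0} =
      {p : X × ℝ | f p.1 * p.2 ≤ 0} ∪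
        {p : X × ℝ | (∃ x', ‖x' - p.1‖ ≤ ε ∧ f p.1 * f x' ≤ 0) ∧ 0 < f p.1 * p.2} := by
  ext ⟨x, y⟩
  constructor
  · rintro ⟨x', hx', hmis⟩
    rcases le_or_gt (f x * y) 0 with hnat | hcorrect
    · exact Or.inl hnat
    · exact Or.inr ⟨⟨x', hx', (mul_nonpos_iff_of_mul_pos hcorrect).1 hmis⟩, hcorrect⟩
  · rintro (hnat | ⟨⟨x', hx', hflip⟩, hcorrect⟩)
    · exact ⟨x, by simpa using hε, hnat⟩
    · exact ⟨x', hx', (mul_nonpos_iff_of_mul_pos hcorrect).2 hflip⟩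

theorem robust_error_decomposition_general
    {X : Type*} [NormedAddCommGroup X] [MeasurableSpace X]
    (μ : Measure (X × ℝ))
    (f : X → ℝ) (hf : Measurable f) (ε : ℝ) (hε : 0 < ε) :
    μ {p : X × ℝ | ∃ x', ‖x' - p.1‖ ≤ ε ∧ f x' * p.2 ≤ 0} =
      μ {p : X × ℝ | f p.1 * p.2 ≤ 0} +
        μ {p : X × ℝ | (∃ x', ‖x' - p.1‖ ≤ ε ∧ f p.1 * f x' ≤ 0) ∧ 0 < f p.1 * p.2} := by
  have hnat : MeasurableSet {p : X × ℝ | f p.1 * p.2 ≤ 0} :=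
    measurableSet_le ((hf.comp measurable_fst).mul measurable_snd) measurable_const
  have hdisj : Disjoint {p : X × ℝ | f p.1 * p.2 ≤ 0}
      {p : X × ℝ | (∃ x', ‖x' - p.1‖ ≤ ε ∧ f p.1 * f x' ≤ 0) ∧ 0 < f p.1 * p.2} :=
    disjoint_left.2 fun _ hmis hbdy => hbdy.2.not_ge hmis
  rw [setOf_exists_mul_nonpos_eq_union f hε.le, measure_union' hdisj hnat]

/-- The robust classification error decomposes exactly as the sum of the natural
classification error and the boundary error: `R_rob(f) = R_nat(f) + R_bdy(f)`. -/
theorem robust_error_decomposition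
    {X : Type*} [NormedAddCommGroup X] [MeasurableSpace X]
    (μ : Measure (X × ℝ)) [IsProbabilityMeasure μ]
    (f : X → ℝ) (hf : Measurable f) (ε : ℝ) (hε : 0 < ε)
    (hY : ∀ᵐ p ∂μ, p.2 = 1 ∨ p.2 = -1) :
    μ {p : X × ℝ | ∃ x', ‖x' - p.1‖ ≤ ε ∧ f x' * p.2 ≤ 0} =
      μ {p : X × ℝ | f p.1 * p.2 ≤ 0} +
        μ {p : X × ℝ | (∃ x', ‖x' - p.1‖ ≤ ε ∧ f p.1 * f x' ≤ 0) ∧ 0 < f p.1 * p.2} :=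
  robust_error_decomposition_general μ f hf ε hε
end

section
/- The ψ-transform of a classification-calibrated loss φ is non-decreasing, continuous, and convex on [0,1], and satisfies ψ(0) = 0. -/
open Set

/-- The conditional `φ`-risk `C_η(α) = η φ(α) + (1-η) φ(-α)`. -/
noncomputable def condRisk (φ : ℝ → ℝ) (η α : ℝ) : ℝ := η * φ α + (1 - η) * φ (-α)

/-- `H(η) = inf_α C_η(α)`. -/
noncomputable def Hopt (φ : ℝ → ℝ) (η : ℝ) : ℝ := ⨅ α : ℝ, condRisk φ η α

/-- `H⁻(η)`, the infimum of `C_η(α)` over `α` with `α (2η - 1) ≤ 0`. -/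
noncomputable def Hneg (φ : ℝ → ℝ) (η : ℝ) : ℝ :=
  ⨅ α : {a : ℝ // a * (2 * η - 1) ≤ 0}, condRisk φ η α.1

/-- `ψ̃(θ) = H⁻((1+θ)/2) − H((1+θ)/2)`. -/
noncomputable def psiTilde (φ : ℝ → ℝ) (θ : ℝ) : ℝ :=
  Hneg φ ((1 + θ) / 2) - Hopt φ ((1 + θ) / 2)

/-- The `ψ`-transform: the largest convex lower bound (biconjugate) of `ψ̃` on `[0,1]`. -/
noncomputable def psiT (φ : ℝ → ℝ) (θ : ℝ) : ℝ :=
  sSup {y : ℝ | ∃ g : ℝ → ℝ, ConvexOn ℝ (Icc 0 1) g ∧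
    (∀ t ∈ Icc (0:ℝ) 1, g t ≤ psiTilde φ t) ∧ y = g θ}

/-- `φ` is classification-calibrated: for every `η ≠ 1/2`, `H⁻(η) > H(η)`. -/
def ClassificationCalibrated (φ : ℝ → ℝ) : Prop :=
  ∀ η ∈ Icc (0:ℝ) 1, η ≠ 1 / 2 → Hopt φ η < Hneg φ η

/-!
`ψ` is the convex envelope of `ψ̃ ≥ 0` on `[0,1]`, hence convex with `0 ≤ ψ ≤ ψ̃`. At `η = 1/2`
the constraint defining `H⁻` is void, so `ψ̃(0) = 0`; thus `ψ` attains its minimum `0` at the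
left endpoint, which makes the convex function `ψ` nondecreasing.

A convex function on `[a,b]` lies below its chord, so it is upper semicontinuous on `[a,b]`, and it
is continuous inside; continuity of `ψ` therefore reduces to lower semicontinuity at `0` (where
`ψ` is minimal) and at `1`. For the latter, `H` is an infimum of affine functions of `η`, hence
upper semicontinuous, and `H⁻(η) ≥ η H⁻(1)` for `η > 1/2`, so `ψ̃` is lower semicontinuous at
`1`; hinge functions `t ↦ max (c (t - 1 + δ)) 0` below `ψ̃` then push `ψ` up near `1`.
-/

open Filter Topology

section Semicontinuity

variable {α β : Type*} [TopologicalSpace α] [Preorder β] {f g : α → β} {s : Set α} {x : α}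

theorem LowerSemicontinuousWithinAt.of_eventually_le (hg : LowerSemicontinuousWithinAt g s x)
    (hle : ∀ᶠ t in 𝓝[s] x, g t ≤ f t) (hx : f x ≤ g x) : LowerSemicontinuousWithinAt f s x :=
  fun y hy => (hg y (hy.trans_le hx)).mp (hle.mono fun _ h1 h2 => h2.trans_le h1)

theorem UpperSemicontinuousWithinAt.of_eventually_le (hg : UpperSemicontinuousWithinAt g s x)
    (hle : ∀ᶠ t in 𝓝[s] x, f t ≤ g t) (hx : g x ≤ f x) : UpperSemicontinuousWithinAt f s x :=
  fun y hy => (hg y (hx.trans_lt hy)).mp (hle.mono fun _ h1 h2 => h1.trans_lt h2)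

theorem IsMinOn.lowerSemicontinuousWithinAt (h : IsMinOn f s x) :
    LowerSemicontinuousWithinAt f s x :=
  fun _ hy => eventually_nhdsWithin_of_forall fun _ ht => hy.trans_le (h ht)

end Semicontinuity

section ConvexEnvelope

variable {E : Type*} [AddCommGroup E] [Module ℝ E] {s : Set E} {f g : E → ℝ} {x : E}

noncomputable def convexEnvelope (s : Set E) (f : E → ℝ) (x : E) : ℝ :=
  sSup {y : ℝ | ∃ g : E → ℝ, ConvexOn ℝ s g ∧ (∀ t ∈ s, g t ≤ f t) ∧ y = g x}

theorem le_convexEnvelope (hg : ConvexOn ℝ s g) (hgf : ∀ t ∈ s, g t ≤ f t) (hx : x ∈ s) :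
    g x ≤ convexEnvelope s f x :=
  le_csSup ⟨f x, by rintro _ ⟨h, -, hhf, rfl⟩; exact hhf x hx⟩ ⟨g, hg, hgf, rfl⟩

theorem convexEnvelope_le (hg : ConvexOn ℝ s g) (hgf : ∀ t ∈ s, g t ≤ f t) (hx : x ∈ s) :
    convexEnvelope s f x ≤ f x :=
  csSup_le ⟨g x, g, hg, hgf, rfl⟩ (by rintro _ ⟨h, -, hhf, rfl⟩; exact hhf x hx)

theorem convexOn_convexEnvelope (hg : ConvexOn ℝ s g) (hgf : ∀ t ∈ s, g t ≤ f t) :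
    ConvexOn ℝ s (convexEnvelope s f) := by
  refine ⟨hg.1, fun u hu v hv a b ha hb hab => ?_⟩
  refine csSup_le ⟨_, g, hg, hgf, rfl⟩ ?_
  rintro _ ⟨h, hh, hhf, rfl⟩
  calc h (a • u + b • v) ≤ a • h u + b • h v := hh.2 hu hv ha hb hab
    _ ≤ a • convexEnvelope s f u + b • convexEnvelope s f v := by
      gcongr <;> exact le_convexEnvelope hh hhf ‹_›

theorem convexEnvelope_nonneg (hs : Convex ℝ s) (hf : ∀ t ∈ s, 0 ≤ f t) (hx : x ∈ s) :
    0 ≤ convexEnvelope s f x :=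
  le_convexEnvelope (convexOn_const 0 hs) hf hx

end ConvexEnvelope

section ConvexInterval

variable {a b : ℝ} {g : ℝ → ℝ}

theorem ConvexOn.le_chord (hg : ConvexOn ℝ (Icc a b) g) {t : ℝ} (ht : t ∈ Icc a b) :
    (b - a) * g t ≤ (b - t) * g a + (t - a) * g b := by
  rcases ht.1.eq_or_lt with rfl | hat
  · simp
  rcases ht.2.eq_or_lt with rfl | htb
  · simp
  exact hg.secant_mono_aux1 ⟨le_rfl, (hat.trans htb).le⟩ ⟨(hat.trans htb).le, le_rfl⟩ hat htb

theorem ConvexOn.continuousAt_of_mem_Ioo (hg : ConvexOn ℝ (Icc a b) g) {x : ℝ} (hx : x ∈ Ioo a b) :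
    ContinuousAt g x :=
  hg.continuousOn_interior.continuousAt (interior_Icc (a := a) (b := b) ▸ Ioo_mem_nhds hx.1 hx.2)

theorem ConvexOn.upperSemicontinuousWithinAt_Icc (hg : ConvexOn ℝ (Icc a b) g) {x : ℝ}
    (hx : x ∈ Icc a b) : UpperSemicontinuousWithinAt g (Icc a b) x := by
  by_cases hint : x ∈ Ioo a b
  · exact (hg.continuousAt_of_mem_Ioo hint).continuousWithinAt.upperSemicontinuousWithinAt
  have hend : x = a ∨ x = b := by grind
  rcases (hx.1.trans hx.2).eq_or_lt with rfl | hab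
  · rw [Icc_self] at hx ⊢
    rw [mem_singleton_iff.1 hx]
    exact fun y hy => by rw [nhdsWithin_singleton]; exact hy
  set L : ℝ → ℝ := fun t => ((b - t) * g a + (t - a) * g b) / (b - a)
  have hL : Continuous L := by fun_prop
  refine (hL.upperSemicontinuous.upperSemicontinuousWithinAt _ _).of_eventually_le
    (eventually_nhdsWithin_of_forall fun t ht => ?_) ?_
  · exact (le_div_iff₀' (sub_pos.2 hab)).2 (hg.le_chord ht)
  · have : b - a ≠ 0 := (sub_pos.2 hab).ne'
    rcases hend with rfl | rfl <;> simp only [L] <;> field_simp <;> simp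

theorem ConvexOn.continuousOn_Icc_of_lowerSemicontinuousWithinAt (hg : ConvexOn ℝ (Icc a b) g)
    (ha : LowerSemicontinuousWithinAt g (Icc a b) a)
    (hb : LowerSemicontinuousWithinAt g (Icc a b) b) : ContinuousOn g (Icc a b) := by
  intro x hx
  refine continuousWithinAt_iff_lower_upperSemicontinuousWithinAt.2
    ⟨?_, hg.upperSemicontinuousWithinAt_Icc hx⟩
  rcases hx.1.eq_or_lt with rfl | hax
  · exact ha
  rcases hx.2.eq_or_lt with rfl | hxb
  · exact hb
  exact (hg.continuousAt_of_mem_Ioo ⟨hax, hxb⟩).continuousWithinAt.lowerSemicontinuousWithinAt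

theorem ConvexOn.monotoneOn_of_isMinOn (hg : ConvexOn ℝ (Icc a b) g) (h : IsMinOn g (Icc a b) a) :
    MonotoneOn g (Icc a b) := by
  intro x hx y hy hxy
  rcases hx.1.eq_or_lt with rfl | hax
  · exact h hy
  exact hg.le_right_of_left_le'' (left_mem_Icc.2 (hx.1.trans hx.2)) hy hax hxy (h hx)

theorem lowerSemicontinuousWithinAt_convexEnvelope_right {f : ℝ → ℝ}
    (hf : ∀ t ∈ Icc a b, 0 ≤ f t) (hfb : LowerSemicontinuousWithinAt f (Icc a b) b) :
    LowerSemicontinuousWithinAt (convexEnvelope (Icc a b) f) (Icc a b) b := by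
  rcases lt_or_ge b a with hba | hab
  · rw [Icc_eq_empty_of_lt hba]
    exact fun _ _ => by simp
  have hs : Convex ℝ (Icc a b) := convex_Icc a b
  intro y hy
  rcases lt_or_ge y 0 with hy0 | hy0
  · exact eventually_nhdsWithin_of_forall fun t ht => hy0.trans_le (convexEnvelope_nonneg hs hf ht)
  have hyf : y < f b := hy.trans_le (convexEnvelope_le (convexOn_const 0 hs) hf
    (right_mem_Icc.2 hab))
  obtain ⟨k, hyk, hkf⟩ := exists_between hyf
  have hk : 0 ≤ k := hy0.trans hyk.le
  obtain ⟨δ, hδ, hδf⟩ := Metric.mem_nhdsWithin_iff.1 (hfb k hkf)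
  set h : ℝ → ℝ := fun t => max (k / δ * (t - (b - δ))) 0
  have hh : ConvexOn ℝ (Icc a b) h :=
    (((convexOn_id hs).add_const (-(b - δ))).smul (div_nonneg hk hδ.le)).sup
      (convexOn_const 0 hs)
  have hhf : ∀ t ∈ Icc a b, h t ≤ f t := by
    intro t ht
    refine max_le ?_ (hf t ht)
    rcases le_or_gt t (b - δ) with htδ | htδ
    · exact (mul_nonpos_of_nonneg_of_nonpos (by positivity) (by linarith)).trans (hf t ht)
    · have htb : t ∈ Metric.ball b δ := by
        rw [Metric.mem_ball, Real.dist_eq, abs_sub_lt_iff]; constructor <;> linarith [ht.2]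
      calc k / δ * (t - (b - δ)) ≤ k / δ * δ := by gcongr; linarith [ht.2]
        _ = k := div_mul_cancel₀ k hδ.ne'
        _ ≤ f t := (hδf ⟨htb, ht⟩).le
  have hhb : h b = k := by simp [h, hδ.ne', hk]
  have : ∀ᶠ t in 𝓝[Icc a b] b, y < h t :=
    ((by fun_prop : Continuous h).tendsto b).mono_left nhdsWithin_le_nhds |>.eventually
      (lt_mem_nhds (hhb ▸ hyk))
  filter_upwards [this, self_mem_nhdsWithin] with t hyt ht
  exact hyt.trans_le (le_convexEnvelope hh hhf ht)

end ConvexInterval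

section Loss

variable {φ : ℝ → ℝ}

theorem condRisk_nonneg (hφ : ∀ t, 0 ≤ φ t) {η : ℝ} (hη : η ∈ Icc (0 : ℝ) 1) (α : ℝ) :
    0 ≤ condRisk φ η α :=
  add_nonneg (mul_nonneg hη.1 (hφ α)) (mul_nonneg (sub_nonneg.2 hη.2) (hφ (-α)))

theorem bddBelow_range_condRisk (hφ : ∀ t, 0 ≤ φ t) {η : ℝ} (hη : η ∈ Icc (0 : ℝ) 1) :
    BddBelow (range (condRisk φ η)) :=
  ⟨0, by rintro _ ⟨α, rfl⟩; exact condRisk_nonneg hφ hη α⟩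

theorem Hopt_le_condRisk (hφ : ∀ t, 0 ≤ φ t) {η : ℝ} (hη : η ∈ Icc (0 : ℝ) 1) (α : ℝ) :
    Hopt φ η ≤ condRisk φ η α :=
  ciInf_le (bddBelow_range_condRisk hφ hη) α

theorem Hneg_le_condRisk (hφ : ∀ t, 0 ≤ φ t) {η : ℝ} (hη : η ∈ Icc (0 : ℝ) 1) {α : ℝ}
    (hα : α * (2 * η - 1) ≤ 0) : Hneg φ η ≤ condRisk φ η α :=
  ciInf_le (f := fun a : {a : ℝ // a * (2 * η - 1) ≤ 0} => condRisk φ η a.1)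
    ((bddBelow_range_condRisk hφ hη).mono (range_comp_subset_range Subtype.val (condRisk φ η)))
    ⟨α, hα⟩

theorem Hopt_le_Hneg (hφ : ∀ t, 0 ≤ φ t) {η : ℝ} (hη : η ∈ Icc (0 : ℝ) 1) :
    Hopt φ η ≤ Hneg φ η :=
  have : Nonempty {a : ℝ // a * (2 * η - 1) ≤ 0} := ⟨⟨0, by simp⟩⟩
  le_ciInf fun α => Hopt_le_condRisk hφ hη α.1

theorem Hneg_half : Hneg φ (1 / 2) = Hopt φ (1 / 2) :=
  (Equiv.subtypeUnivEquiv (p := fun a : ℝ => a * (2 * (1 / 2) - 1) ≤ 0) fun α => by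
    norm_num).iInf_comp (g := condRisk φ (1 / 2))

theorem upperSemicontinuousOn_Hopt (hφ : ∀ t, 0 ≤ φ t) : UpperSemicontinuousOn (Hopt φ) (Icc 0 1) :=
  upperSemicontinuousOn_ciInf (fun _ hη => bddBelow_range_condRisk hφ hη) fun α =>
    (Continuous.upperSemicontinuous (by unfold condRisk; fun_prop)).upperSemicontinuousOn _

theorem mul_Hneg_one_le_Hneg (hφ : ∀ t, 0 ≤ φ t) {η : ℝ} (hη : η ∈ Ioc (1 / 2) 1) :
    η * Hneg φ 1 ≤ Hneg φ η := by
  have : Nonempty {a : ℝ // a * (2 * η - 1) ≤ 0} := ⟨⟨0, by simp⟩⟩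
  refine le_ciInf fun ⟨α, hα⟩ => ?_
  have hα0 : α ≤ 0 := nonpos_of_mul_nonpos_left hα (by linarith [hη.1])
  have h1 : Hneg φ 1 ≤ φ α := by
    simpa [condRisk] using Hneg_le_condRisk hφ (right_mem_Icc.2 zero_le_one) (α := α) (by linarith)
  have := hφ (-α)
  simp only [condRisk]
  nlinarith [hη.1, hη.2]

theorem lowerSemicontinuousWithinAt_Hneg_one (hφ : ∀ t, 0 ≤ φ t) :
    LowerSemicontinuousWithinAt (Hneg φ) (Icc 0 1) 1 := by
  refine ((continuous_id.mul continuous_const).continuousWithinAt.lowerSemicontinuousWithinAt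
    (f := fun η => η * Hneg φ 1)).of_eventually_le ?_ (by simp)
  filter_upwards [self_mem_nhdsWithin, nhdsWithin_le_nhds (Ioi_mem_nhds one_half_lt_one)]
    with η hη hη'
  exact mul_Hneg_one_le_Hneg hφ ⟨hη', hη.2⟩

theorem lowerSemicontinuousWithinAt_psiTilde_one (hφ : ∀ t, 0 ≤ φ t) :
    LowerSemicontinuousWithinAt (psiTilde φ) (Icc 0 1) 1 := by
  set e : ℝ → ℝ := fun θ => (1 + θ) / 2
  have he : ContinuousWithinAt e (Icc 0 1) 1 := by fun_prop
  have he1 : e 1 = 1 := by norm_num [e]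
  have hmaps : MapsTo e (Icc 0 1) (Icc 0 1) := fun θ hθ =>
    ⟨by simp only [e]; linarith [hθ.1], by simp only [e]; linarith [hθ.2]⟩
  have hneg : LowerSemicontinuousWithinAt (Hneg φ) (Icc 0 1) (e 1) := by
    rw [he1]; exact lowerSemicontinuousWithinAt_Hneg_one hφ
  have hopt : UpperSemicontinuousWithinAt (Hopt φ) (Icc 0 1) (e 1) :=
    upperSemicontinuousOn_Hopt hφ _ (hmaps (right_mem_Icc.2 zero_le_one))
  have hopt' := continuous_neg.continuousAt.comp_upperSemicontinuousWithinAt_antitone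
    (hopt.comp he hmaps) fun _ _ h => neg_le_neg h
  exact (hneg.comp he hmaps).add hopt'

theorem psiTilde_nonneg (hφ : ∀ t, 0 ≤ φ t) {θ : ℝ} (hθ : θ ∈ Icc (0 : ℝ) 1) :
    0 ≤ psiTilde φ θ :=
  sub_nonneg.2 (Hopt_le_Hneg hφ ⟨by linarith [hθ.1], by linarith [hθ.2]⟩)

theorem psiTilde_zero : psiTilde φ 0 = 0 := by
  rw [psiTilde, show ((1 : ℝ) + 0) / 2 = 1 / 2 by norm_num, Hneg_half, sub_self]

end Loss

theorem psi_transform_properties_general (φ : ℝ → ℝ) (hφ : ∀ t, 0 ≤ φ t) :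
    MonotoneOn (psiT φ) (Icc 0 1) ∧ ContinuousOn (psiT φ) (Icc 0 1) ∧
      ConvexOn ℝ (Icc 0 1) (psiT φ) ∧ psiT φ 0 = 0 := by
  have hψ : psiT φ = convexEnvelope (Icc 0 1) (psiTilde φ) := rfl
  have h0 : (0 : ℝ) ∈ Icc 0 1 := left_mem_Icc.2 zero_le_one
  have hnonneg : ∀ t ∈ Icc (0 : ℝ) 1, 0 ≤ psiTilde φ t := fun _ => psiTilde_nonneg hφ
  have hconv := convexOn_convexEnvelope (convexOn_const 0 (convex_Icc 0 1)) hnonneg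
  have hzero : convexEnvelope (Icc 0 1) (psiTilde φ) 0 = 0 :=
    le_antisymm ((convexEnvelope_le (convexOn_const 0 (convex_Icc 0 1)) hnonneg h0).trans_eq
      psiTilde_zero) (convexEnvelope_nonneg (convex_Icc 0 1) hnonneg h0)
  have hmin : IsMinOn (convexEnvelope (Icc 0 1) (psiTilde φ)) (Icc 0 1) 0 := fun t ht =>
    hzero.trans_le (convexEnvelope_nonneg (convex_Icc 0 1) hnonneg ht)
  rw [hψ]
  exact ⟨hconv.monotoneOn_of_isMinOn hmin,
    hconv.continuousOn_Icc_of_lowerSemicontinuousWithinAt hmin.lowerSemicontinuousWithinAt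
      (lowerSemicontinuousWithinAt_convexEnvelope_right hnonneg
        (lowerSemicontinuousWithinAt_psiTilde_one hφ)),
    hconv, hzero⟩

/-- The `ψ`-transform of a classification-calibrated loss is non-decreasing, continuous and
convex on `[0,1]`, and satisfies `ψ(0) = 0`. -/
theorem psi_transform_properties (φ : ℝ → ℝ) (hφ : ∀ t, 0 ≤ φ t)
    (hcc : ClassificationCalibrated φ) :
    MonotoneOn (psiT φ) (Icc 0 1) ∧ ContinuousOn (psiT φ) (Icc 0 1) ∧
      ConvexOn ℝ (Icc 0 1) (psiT φ) ∧ psiT φ 0 = 0 :=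
  psi_transform_properties_general φ hφ
end

section
/- For the hinge loss φ(α) = max{1-α, 0}, the ψ-transform satisfies ψ(θ) = θ for all θ ∈ [0,1]. -/
open Set

/-! The hinge loss has `H⁻ ≡ 1` and `H(η) = 2(1 - η)` for `η ≥ 1/2`, so `ψ̃(θ) = θ` on `[0,1]`;
being linear, `ψ̃` is its own convex biconjugate there. -/

theorem ciInf_eq_of_forall_le {α ι : Type*} [ConditionallyCompleteLattice α] {f : ι → α} {b : α}
    (i : ι) (hi : f i = b) (hle : ∀ j, b ≤ f j) : ⨅ j, f j = b :=
  have : Nonempty ι := ⟨i⟩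
  IsGLB.ciInf_eq (IsLeast.isGLB ⟨⟨i, hi⟩, Set.forall_mem_range.2 hle⟩)

theorem psiT_eq_psiTilde_of_convexOn {φ : ℝ → ℝ} (hconv : ConvexOn ℝ (Icc 0 1) (psiTilde φ))
    {θ : ℝ} (hθ : θ ∈ Icc (0:ℝ) 1) : psiT φ θ = psiTilde φ θ := by
  refine IsGreatest.csSup_eq ⟨⟨psiTilde φ, hconv, fun _ _ => le_rfl, rfl⟩, ?_⟩
  rintro _ ⟨g, -, hg, rfl⟩
  exact hg θ hθ

def hinge (α : ℝ) : ℝ := max (1 - α) 0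

theorem condRisk_hinge_ge {η : ℝ} (hη₀ : 0 ≤ η) (hη₁ : η ≤ 1) (α : ℝ) :
    1 - α * (2 * η - 1) ≤ condRisk hinge η α := by
  have hpos : η * (1 - α) ≤ η * hinge α := mul_le_mul_of_nonneg_left (le_max_left _ _) hη₀
  have hneg : (1 - η) * (1 - -α) ≤ (1 - η) * hinge (-α) :=
    mul_le_mul_of_nonneg_left (le_max_left _ _) (sub_nonneg.2 hη₁)
  rw [condRisk]
  linarith

theorem Hneg_hinge {η : ℝ} (hη₀ : 0 ≤ η) (hη₁ : η ≤ 1) : Hneg hinge η = 1 :=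
  ciInf_eq_of_forall_le ⟨0, by simp⟩ (by simp [condRisk, hinge]) fun ⟨α, hα⟩ => by
    linarith [condRisk_hinge_ge hη₀ hη₁ α]

theorem Hopt_hinge {η : ℝ} (hη₀ : 1 / 2 ≤ η) (hη₁ : η ≤ 1) : Hopt hinge η = 2 * (1 - η) := by
  refine ciInf_eq_of_forall_le 1 (by norm_num [condRisk, hinge]; ring) fun α => ?_
  have hsum : 2 ≤ hinge α + hinge (-α) := by
    unfold hinge
    linarith [le_max_left (1 - α) 0, le_max_left (1 - -α) 0]
  have hsym : 2 * (1 - η) ≤ (1 - η) * (hinge α + hinge (-α)) := by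
    linarith [mul_le_mul_of_nonneg_left hsum (sub_nonneg.2 hη₁)]
  have hpos : 0 ≤ (2 * η - 1) * hinge α := mul_nonneg (by linarith) (le_max_right _ _)
  have hsplit :
      condRisk hinge η α = (1 - η) * (hinge α + hinge (-α)) + (2 * η - 1) * hinge α := by
    rw [condRisk]; ring
  linarith

theorem psiTilde_hinge {θ : ℝ} (hθ : θ ∈ Icc (0:ℝ) 1) : psiTilde hinge θ = θ := by
  rw [psiTilde, Hneg_hinge (by linarith [hθ.1]) (by linarith [hθ.2]),
    Hopt_hinge (by linarith [hθ.1]) (by linarith [hθ.2])]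
  ring

/-- For the hinge loss `φ(α) = max {1 - α, 0}`, the `ψ`-transform is `ψ(θ) = θ` on `[0,1]`. -/
theorem psi_transform_hinge :
    ∀ θ ∈ Icc (0:ℝ) 1, psiT (fun α => max (1 - α) 0) θ = θ := by
  intro θ hθ
  have hconv : ConvexOn ℝ (Icc 0 1) (psiTilde hinge) :=
    (convexOn_id (convex_Icc 0 1)).congr fun t ht => (psiTilde_hinge ht).symm
  exact (psiT_eq_psiTilde_of_convexOn hconv hθ).trans (psiTilde_hinge hθ)
end

section
/- For the logistic loss φ(α) = log₂(1 + exp(−α)), the ψ-transform satisfies ψ(θ) = ½(1−θ)log₂(1−θ) + ½(1+θ)log₂(1+θ) for all θ ∈ [0,1]. -/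
/-!
With `σ = (1 + e^{-α})⁻¹` we have `1 - σ = (1 + e^{α})⁻¹`, so
`C_η(α) · log 2 = η log σ⁻¹ + (1 - η) log (1 - σ)⁻¹` is a binary cross-entropy. By Gibbs'
inequality `H(η) = h(η) / log 2`, `h` the binary entropy, attained at the log-odds
`α = log (η / (1 - η))` and approached as `α → ±∞` when `η ∈ {0, 1}`.
Since `φ(α) - φ(-α) = -α / log 2` and `φ(α) + φ(-α) ≥ 2 = 2 φ(0)`, every `α` with
`α (2η - 1) ≤ 0` has `C_η(α) ≥ 1 = C_η(0)`, so `H⁻ ≡ 1`. Hence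
`ψ̃(θ) = 1 - h((1 + θ)/2) / log 2`, which is already convex because `h` is concave: `ψ = ψ̃`.
-/

open Set

open Real Filter Topology

lemma mul_log_inv_le_mul_log_inv_add_sub {x y : ℝ} (hx : 0 ≤ x) (hy : 0 < y) :
    x * log x⁻¹ ≤ x * log y⁻¹ + (y - x) := by
  rcases hx.eq_or_lt with rfl | hx
  · simpa using hy.le
  have h := self_sub_one_le_mul_log (div_pos hx hy).le
  rw [log_div hx.ne' hy.ne'] at h
  rw [log_inv, log_inv]
  have := mul_le_mul_of_nonneg_left h hy.le
  field_simp at this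
  linarith

lemma binEntropy_le_crossEntropy {η σ τ : ℝ} (h0 : 0 ≤ η) (h1 : η ≤ 1) (hσ : 0 < σ)
    (hτ : 0 < τ) (hστ : σ + τ ≤ 1) : binEntropy η ≤ η * log σ⁻¹ + (1 - η) * log τ⁻¹ := by
  have hσ' := mul_log_inv_le_mul_log_inv_add_sub h0 hσ
  have hτ' := mul_log_inv_le_mul_log_inv_add_sub (sub_nonneg.2 h1) hτ
  rw [binEntropy]
  linarith

noncomputable def logisticLoss (α : ℝ) : ℝ := logb 2 (1 + exp (-α))

lemma tendsto_logisticLoss_atTop : Tendsto logisticLoss atTop (𝓝 0) := by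
  have h : Tendsto (fun α => 1 + exp (-α)) atTop (𝓝 (1 + 0)) :=
    tendsto_exp_neg_atTop_nhds_zero.const_add 1
  rw [add_zero] at h
  have hlog := (continuousAt_logb (b := 2) one_ne_zero).tendsto.comp h
  rwa [logb_one] at hlog

lemma logisticLoss_sub_logisticLoss_neg (α : ℝ) :
    logisticLoss α - logisticLoss (-α) = -α / log 2 := by
  have h : 1 + exp (-α) = exp (-α) * (1 + exp α) := by
    rw [mul_add, mul_one, ← exp_add, neg_add_cancel, exp_zero, add_comm]
  rw [logisticLoss, logisticLoss, neg_neg, h, logb_mul (exp_ne_zero _) (by positivity), logb,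
    log_exp]
  ring

lemma two_le_logisticLoss_add_logisticLoss_neg (α : ℝ) :
    2 ≤ logisticLoss α + logisticLoss (-α) := by
  have h : (1 + exp (-α)) * (1 + exp α) = 2 + 2 * cosh α := by
    have hprod : exp (-α) * exp α = 1 := by rw [← exp_add, neg_add_cancel, exp_zero]
    rw [cosh_eq]
    linear_combination hprod
  rw [logisticLoss, logisticLoss, neg_neg, ← logb_mul (by positivity) (by positivity), h]
  calc (2 : ℝ) = logb 2 4 := by
        rw [show (4 : ℝ) = 2 ^ (2 : ℝ) by norm_num, logb_rpow (by norm_num) (by norm_num)]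
    _ ≤ logb 2 (2 + 2 * cosh α) :=
        logb_le_logb_of_le one_lt_two (by norm_num) (by linarith [one_le_cosh α])

lemma one_le_condRisk_logisticLoss {η α : ℝ} (hα : α * (2 * η - 1) ≤ 0) :
    1 ≤ condRisk logisticLoss η α := by
  have hsplit : condRisk logisticLoss η α = (logisticLoss α + logisticLoss (-α)) / 2 +
      (η - 1 / 2) * (logisticLoss α - logisticLoss (-α)) := by
    rw [condRisk]; ring
  have hsym : 0 ≤ (η - 1 / 2) * (logisticLoss α - logisticLoss (-α)) := by
    rw [logisticLoss_sub_logisticLoss_neg, mul_div_assoc']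
    exact div_nonneg (by nlinarith) (log_pos one_lt_two).le
  linarith [two_le_logisticLoss_add_logisticLoss_neg α]

lemma hneg_logisticLoss (η : ℝ) : Hneg logisticLoss η = 1 := by
  have h0 : (0 : ℝ) * (2 * η - 1) ≤ 0 := by simp
  have : Nonempty {a : ℝ // a * (2 * η - 1) ≤ 0} := ⟨⟨0, h0⟩⟩
  refine le_antisymm ?_ (le_ciInf fun a => one_le_condRisk_logisticLoss a.2)
  refine (ciInf_le ⟨1, ?_⟩ ⟨0, h0⟩).trans_eq ?_
  · rintro _ ⟨a, rfl⟩
    exact one_le_condRisk_logisticLoss a.2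
  · norm_num [condRisk, logisticLoss]

lemma inv_one_add_exp_neg_add_inv_one_add_exp (α : ℝ) :
    (1 + exp (-α))⁻¹ + (1 + exp α)⁻¹ = 1 := by
  rw [exp_neg]
  field_simp
  ring

lemma binEntropy_div_log_two_le_condRisk {η : ℝ} (h0 : 0 ≤ η) (h1 : η ≤ 1) (α : ℝ) :
    binEntropy η / log 2 ≤ condRisk logisticLoss η α := by
  have h := binEntropy_le_crossEntropy h0 h1 (by positivity) (by positivity)
    (inv_one_add_exp_neg_add_inv_one_add_exp α).le
  rw [inv_inv, inv_inv] at h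
  rw [condRisk, logisticLoss, logisticLoss, neg_neg, logb, logb, div_le_iff₀ (log_pos one_lt_two)]
  calc binEntropy η ≤ η * log (1 + exp (-α)) + (1 - η) * log (1 + exp α) := h
    _ = _ := by field_simp

lemma condRisk_logisticLoss_log_odds {η : ℝ} (h0 : 0 < η) (h1 : η < 1) :
    condRisk logisticLoss η (log (η / (1 - η))) = binEntropy η / log 2 := by
  have h1' : 0 < 1 - η := sub_pos.2 h1
  have e1 : 1 + (η / (1 - η))⁻¹ = η⁻¹ := by field_simp; ring
  have e2 : 1 + η / (1 - η) = (1 - η)⁻¹ := by field_simp; ring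
  rw [condRisk, logisticLoss, logisticLoss, neg_neg, exp_neg, exp_log (by positivity), e1, e2,
    binEntropy, logb, logb]
  ring

lemma hopt_logisticLoss {η : ℝ} (h0 : 0 ≤ η) (h1 : η ≤ 1) :
    Hopt logisticLoss η = binEntropy η / log 2 := by
  have hbdd : BddBelow (range (condRisk logisticLoss η)) :=
    ⟨_, forall_mem_range.2 (binEntropy_div_log_two_le_condRisk h0 h1)⟩
  refine le_antisymm ?_ (le_ciInf (binEntropy_div_log_two_le_condRisk h0 h1))
  rcases h0.eq_or_lt with rfl | h0
  · rw [binEntropy_zero, zero_div]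
    exact ge_of_tendsto' tendsto_logisticLoss_atTop fun α =>
      (ciInf_le hbdd (-α)).trans_eq (by simp [condRisk])
  rcases h1.eq_or_lt with rfl | h1
  · rw [binEntropy_one, zero_div]
    exact ge_of_tendsto' tendsto_logisticLoss_atTop fun α =>
      (ciInf_le hbdd α).trans_eq (by simp [condRisk])
  exact (ciInf_le hbdd _).trans_eq (condRisk_logisticLoss_log_odds h0 h1)

lemma psiTilde_logisticLoss {θ : ℝ} (h0 : -1 ≤ θ) (h1 : θ ≤ 1) :
    psiTilde logisticLoss θ = 1 - binEntropy ((1 + θ) / 2) / log 2 := by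
  rw [psiTilde, hneg_logisticLoss, hopt_logisticLoss (by linarith) (by linarith)]

lemma convexOn_one_sub_binEntropy_div_log_two :
    ConvexOn ℝ (Icc (-1) 1) fun θ => 1 - binEntropy ((1 + θ) / 2) / log 2 := by
  have hconc := strictConcave_binEntropy.concaveOn.comp_affineMap
    (AffineMap.lineMap (1 / 2 : ℝ) 1 : ℝ →ᵃ[ℝ] ℝ)
  have hpre : Icc (-1 : ℝ) 1 ⊆ AffineMap.lineMap (1 / 2 : ℝ) 1 ⁻¹' Icc 0 1 := by
    intro θ hθ
    simp only [mem_preimage, AffineMap.lineMap_apply_ring', mem_Icc]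
    constructor <;> linarith [hθ.1, hθ.2]
  have hconv := ((hconc.subset hpre (convex_Icc _ _)).neg.smul
    (inv_nonneg.2 (log_pos one_lt_two).le)).add_const 1
  refine hconv.congr fun θ _ => ?_
  simp only [Pi.add_apply, Pi.neg_apply, Function.comp_apply, AffineMap.lineMap_apply_ring',
    smul_eq_mul]
  rw [show θ * (1 - 1 / 2) + 1 / 2 = (1 + θ) / 2 by ring]
  ring

lemma half_mul_log_inv_half (x : ℝ) : x / 2 * log (x / 2)⁻¹ = x / 2 * (log 2 - log x) := by
  rcases eq_or_ne x 0 with rfl | hx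
  · simp
  rw [log_inv, log_div hx two_ne_zero]
  ring

lemma one_sub_binEntropy_div_log_two (θ : ℝ) :
    1 - binEntropy ((1 + θ) / 2) / log 2 =
      (1 - θ) / 2 * logb 2 (1 - θ) + (1 + θ) / 2 * logb 2 (1 + θ) := by
  have hlog : log 2 ≠ 0 := (log_pos one_lt_two).ne'
  rw [binEntropy, show 1 - (1 + θ) / 2 = (1 - θ) / 2 by ring, half_mul_log_inv_half,
    half_mul_log_inv_half, logb, logb]
  field_simp
  ring

lemma psiT_eq_of_convexOn {φ g : ℝ → ℝ} (hg : ConvexOn ℝ (Icc 0 1) g)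
    (hgψ : EqOn g (psiTilde φ) (Icc 0 1)) {θ : ℝ} (hθ : θ ∈ Icc 0 1) : psiT φ θ = g θ :=
  IsGreatest.csSup_eq ⟨⟨g, hg, fun t ht => (hgψ ht).le, rfl⟩, by
    rintro _ ⟨f, -, hf, rfl⟩
    exact (hf θ hθ).trans (hgψ hθ).ge⟩

/-- For the logistic loss `φ(α) = log₂(1 + exp (-α))`, the `ψ`-transform is
`ψ(θ) = ½(1-θ) log₂(1-θ) + ½(1+θ) log₂(1+θ)` on `[0,1]`. -/
theorem psi_transform_logistic :
    ∀ θ ∈ Icc (0:ℝ) 1, psiT (fun α => Real.logb 2 (1 + Real.exp (-α))) θ =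
      (1 - θ) / 2 * Real.logb 2 (1 - θ) + (1 + θ) / 2 * Real.logb 2 (1 + θ) := by
  intro θ hθ
  have hsub : Icc (0 : ℝ) 1 ⊆ Icc (-1) 1 := Icc_subset_Icc (by norm_num) le_rfl
  change psiT logisticLoss θ = _
  rw [psiT_eq_of_convexOn (convexOn_one_sub_binEntropy_div_log_two.subset hsub (convex_Icc 0 1))
    (fun t ht => (psiTilde_logisticLoss (hsub ht).1 ht.2).symm) hθ]
  exact one_sub_binEntropy_div_log_two θ
end

section
/- For the hinge loss φ(α) = max{1−α,0} and η ∈ [0,1], the optimal conditional φ-risk is H(η) = 2·min{η, 1−η}, and the constrained optimal risk is H⁻(η) = 1 for all η; hence ψ̃(θ) = H⁻((1+θ)/2) − H((1+θ)/2) = θ. -/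
open Set

/-! Every margin `α` costs at least `1 - α (2η - 1)`, because the hinge dominates the affine
function `1 - α` and both weights are nonnegative; the constraint defining `H⁻` makes this at
least `1`, attained at `α = 0`. Splitting the weight of the larger side instead gives the bound
`2 min(η, 1 - η)`, attained at `α = ±1`. -/

theorem ciInf_eq_of_forall_ge_of_eq {ι α : Type*} [ConditionallyCompleteLattice α] {f : ι → α}
    {m : α} (h : ∀ i, m ≤ f i) (i₀ : ι) (hi₀ : f i₀ = m) : ⨅ i, f i = m :=
  haveI : Nonempty ι := ⟨i₀⟩
  (show IsLeast (range f) m from ⟨⟨i₀, hi₀⟩, by rintro _ ⟨i, rfl⟩; exact h i⟩).isGLB.ciInf_eq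

section HingeLoss

variable {η : ℝ}

theorem one_sub_mul_le_condRisk_hinge (h0 : 0 ≤ η) (h1 : η ≤ 1) (α : ℝ) :
    1 - α * (2 * η - 1) ≤ condRisk (fun α => max (1 - α) 0) η α := by
  have hpos : 1 - α ≤ max (1 - α) 0 := le_max_left _ _
  have hneg : 1 - -α ≤ max (1 - -α) 0 := le_max_left _ _
  rw [condRisk]
  nlinarith

theorem two_mul_min_le_condRisk_hinge (h0 : 0 ≤ η) (h1 : η ≤ 1) (α : ℝ) :
    2 * min η (1 - η) ≤ condRisk (fun α => max (1 - α) 0) η α := by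
  have hpos : 1 - α ≤ max (1 - α) 0 := le_max_left _ _
  have hneg : 1 - -α ≤ max (1 - -α) 0 := le_max_left _ _
  have hpos' : 0 ≤ max (1 - α) 0 := le_max_right _ _
  have hneg' : 0 ≤ max (1 - -α) 0 := le_max_right _ _
  rw [condRisk]
  rcases le_total η (1 - η) with h | h
  · rw [min_eq_left h]; nlinarith
  · rw [min_eq_right h]; nlinarith

theorem Hopt_hinge_s18 (h0 : 0 ≤ η) (h1 : η ≤ 1) :
    Hopt (fun α => max (1 - α) 0) η = 2 * min η (1 - η) := by
  rcases le_total η (1 - η) with h | h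
  · refine ciInf_eq_of_forall_ge_of_eq (two_mul_min_le_condRisk_hinge h0 h1) (-1) ?_
    rw [min_eq_left h, condRisk]; norm_num; ring
  · refine ciInf_eq_of_forall_ge_of_eq (two_mul_min_le_condRisk_hinge h0 h1) 1 ?_
    rw [min_eq_right h, condRisk]; norm_num; ring

theorem Hneg_hinge_s18 (h0 : 0 ≤ η) (h1 : η ≤ 1) : Hneg (fun α => max (1 - α) 0) η = 1 :=
  ciInf_eq_of_forall_ge_of_eq
    (fun α => (one_sub_mul_le_condRisk_hinge h0 h1 α.1).trans' (by linarith [α.2]))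
    ⟨0, by simp⟩ (by norm_num [condRisk])

end HingeLoss

/-- For the hinge loss, `H(η) = 2 min{η, 1−η}`, `H⁻(η) = 1`, and hence `ψ̃(θ) = θ`. -/
theorem hinge_conditional_risks :
    (∀ η ∈ Icc (0:ℝ) 1,
        Hopt (fun α => max (1 - α) 0) η = 2 * min η (1 - η) ∧
          Hneg (fun α => max (1 - α) 0) η = 1) ∧
      ∀ θ ∈ Icc (0:ℝ) 1, psiTilde (fun α => max (1 - α) 0) θ = θ := by
  refine ⟨fun η hη => ⟨Hopt_hinge_s18 hη.1 hη.2, Hneg_hinge_s18 hη.1 hη.2⟩, fun θ ⟨hθ0, hθ1⟩ => ?_⟩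
  have h0 : 0 ≤ (1 + θ) / 2 := by linarith
  have h1 : (1 + θ) / 2 ≤ 1 := by linarith
  rw [psiTilde, Hopt_hinge_s18 h0 h1, Hneg_hinge_s18 h0 h1, min_eq_right (by linarith)]
  ring
end
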